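/- The n+r polynomials (ψ_0,…,ψ_{q_1r-1}, γ_{n-r_1},…,γ_{n-1}, b_0,…,b_{r-1}) form a local coordinate system around zero on ℂ^n × ℂ^r: each of these polynomials has zero constant term, and the (n+r)×(n+r) Jacobian matrix of this tuple with respect to (a_0,…,a_{n-1},b_0,…,b_{r-1}) evaluated at the origin is invertible. Moreover, defining γ_0,…,γ_{n-1} ∈ R as the coefficients of t^n,…,t^1 respectively in the power series (1 + b_{r-1}t + ⋯ + b_0 t^r)^{-q_1}·(1 + a_{n-1}t + ⋯ + a_0 t^n) truncated mod t^{n+1}, the ring R is generated as a ℂ-algebra by γ_0,…,γ_{n-1}, b_0,…,b_{r-1}. -/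

import Mathlib

open MvPolynomial Matrix

noncomputable section

namespace TB

/-- The polynomial ring `ℂ[a_0,…,a_{n-1},b_0,…,b_{r-1}]`: variable `Sum.inl i` is `a_i`
and `Sum.inr j` is `b_j`. -/
abbrev R (n r : ℕ) : Type := MvPolynomial (Fin n ⊕ Fin r) ℂ

/-- The power series `1 + (cf 1)·t + ⋯ + (cf m)·t^m`. -/
def ser {A : Type*} [CommRing A] (m : ℕ) (cf : ℕ → A) : PowerSeries A :=
  PowerSeries.mk fun k => if k = 0 then 1 else if k ≤ m then cf k else 0

/-- `1 + a_{n-1} t + ⋯ + a_0 t^n`. -/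
def Aser (n r : ℕ) : PowerSeries (R n r) :=
  ser n fun k => if h : 1 ≤ k ∧ k ≤ n then X (Sum.inl ⟨n - k, by omega⟩) else 0

/-- `1 + b_{r-1} t + ⋯ + b_0 t^r`. -/
def Bser (n r : ℕ) : PowerSeries (R n r) :=
  ser r fun k => if h : 1 ≤ k ∧ k ≤ r then X (Sum.inr ⟨r - k, by omega⟩) else 0

/-- `1 + d_{n-1} t + ⋯ + d_0 t^n`. -/
def Dser (n r : ℕ) (d : Fin n → R n r) : PowerSeries (R n r) :=
  ser n fun k => if h : 1 ≤ k ∧ k ≤ n then d ⟨n - k, by omega⟩ else 0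

/-- `1 + d_{n-1} t + ⋯ + d_1 t^{n-1}`. -/
def Dhatser (n r : ℕ) (d : Fin n → R n r) : PowerSeries (R n r) :=
  ser (n - 1) fun k => if h : 1 ≤ k ∧ k ≤ n - 1 then d ⟨n - k, by omega⟩ else 0

/-- `f(x) = x^n + a_{n-1}x^{n-1} + ⋯ + a_0`. -/
def fpoly (n r : ℕ) : Polynomial (R n r) :=
  Polynomial.X ^ n + ∑ i : Fin n, Polynomial.C (X (Sum.inl i)) * Polynomial.X ^ (i : ℕ)

/-- `g(x) = x^r + b_{r-1}x^{r-1} + ⋯ + b_0`. -/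
def gpoly (n r : ℕ) : Polynomial (R n r) :=
  Polynomial.X ^ r + ∑ j : Fin r, Polynomial.C (X (Sum.inr j)) * Polynomial.X ^ (j : ℕ)

/-- The coefficient `c_k` of `f·g`, for `0 ≤ k ≤ n+r-1`. -/
def cc (n r : ℕ) (k : Fin (n + r)) : R n r := (fpoly n r * gpoly n r).coeff (k : ℕ)

/-- `d_0, …, d_{n-1}` are the unique polynomials with
`(1 + b_{r-1}t + ⋯ + b_0 t^r)(1 + d_{n-1}t + ⋯ + d_0 t^n) ≡ 1 + a_{n-1}t + ⋯ + a_0 t^n (mod t^{n+1})`. -/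
def dSpec (n r : ℕ) (d : Fin n → R n r) : Prop :=
  ∀ k ≤ n, PowerSeries.coeff k (Bser n r * Dser n r d)
    = PowerSeries.coeff k (Aser n r)

/-- `ψ_i = d_i` for `0 ≤ i ≤ r-1`, and
`ψ_{s·r+i} = ∂^s d_{r-1} / (∂b_0^{s-1} ∂b_{r-1-i})` for `s ≥ 1`, `0 ≤ i ≤ r-1`. -/
def psi (n r : ℕ) (hr : 0 < r) (hrn : r ≤ n) (d : Fin n → R n r) (m : ℕ) : R n r :=
  if h : m < r then d ⟨m, by omega⟩
  else
    (fun q => pderiv (Sum.inr (⟨0, hr⟩ : Fin r)) q)^[m / r - 1]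
      (pderiv (Sum.inr (⟨r - 1 - m % r, by omega⟩ : Fin r)) (d ⟨r - 1, by omega⟩))

/-- The `m×m` lower shift matrix over `R n r`. -/
def Lmat (n r m : ℕ) : Matrix (Fin m) (Fin m) (R n r) :=
  Matrix.of fun i j => if (i : ℕ) = (j : ℕ) + 1 then 1 else 0

/-- `B = I_n + b_{r-1}L_n + ⋯ + b_0 L_n^r`. -/
def Bmat (n r : ℕ) (hr : 0 < r) : Matrix (Fin n) (Fin n) (R n r) :=
  1 + ∑ k ∈ Finset.range r, (X (Sum.inr (⟨r - 1 - k, by omega⟩ : Fin r)) : R n r) • Lmat n r n ^ (k + 1)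

/-- `D̂ = I_n + d_{n-1}L_n + ⋯ + d_1 L_n^{n-1}`. -/
def Dhat (n r : ℕ) (hn : 0 < n) (d : Fin n → R n r) : Matrix (Fin n) (Fin n) (R n r) :=
  1 + ∑ k ∈ Finset.range (n - 1), d ⟨n - 1 - k, by omega⟩ • Lmat n r n ^ (k + 1)

/-- `D`: the first `r` columns of `D̂`. -/
def Dmat (n r : ℕ) (hn : 0 < n) (hrn : r ≤ n) (d : Fin n → R n r) :
    Matrix (Fin n) (Fin r) (R n r) :=
  (Dhat n r hn d).submatrix id (Fin.castLE hrn)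

/-- `Â = I_n + a_{n-1}L_n + ⋯ + a_1 L_n^{n-1}`. -/
def Ahat (n r : ℕ) (hn : 0 < n) : Matrix (Fin n) (Fin n) (R n r) :=
  1 + ∑ k ∈ Finset.range (n - 1),
    (X (Sum.inl (⟨n - 1 - k, by omega⟩ : Fin n)) : R n r) • Lmat n r n ^ (k + 1)

/-- `A`: the first `r` columns of `Â`. -/
def Amat (n r : ℕ) (hn : 0 < n) (hrn : r ≤ n) : Matrix (Fin n) (Fin r) (R n r) :=
  (Ahat n r hn).submatrix id (Fin.castLE hrn)

/-- The Jacobian matrix of a family `p` of elements of `R n r`: the row of index `i` is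
`(∂p_i/∂a_{n-1}, …, ∂p_i/∂a_0, ∂p_i/∂b_{r-1}, …, ∂p_i/∂b_0)`. -/
def jac {n r : ℕ} {ι : Type*} (p : ι → R n r) : Matrix ι (Fin (n + r)) (R n r) :=
  Matrix.of fun i j =>
    if h : (j : ℕ) < n then pderiv (Sum.inl (⟨n - 1 - (j : ℕ), by omega⟩ : Fin n)) (p i)
    else
      pderiv (Sum.inr (⟨r - 1 - ((j : ℕ) - n), by have := j.isLt; omega⟩ : Fin r)) (p i)

/-- The set of all `k×k` minors of a matrix. -/
def minorsSet {n r : ℕ} {ι : Type*} (k : ℕ) (M : Matrix ι (Fin (n + r)) (R n r)) :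
    Set (R n r) :=
  { x | ∃ (ri : Fin k → ι) (ci : Fin k → Fin (n + r)), x = (M.submatrix ri ci).det }

/-- Evaluation at the origin `a_i = b_j = 0`. -/
def ev0 (n r : ℕ) : R n r →+* ℂ := eval fun _ => 0

/-- The maximal ideal `(a_0,…,a_{n-1},b_0,…,b_{r-1})`. -/
def mIdeal (n r : ℕ) : Ideal (R n r) :=
  Ideal.span (Set.range (X : (Fin n ⊕ Fin r) → R n r))

/-- `1 + g_1 t + ⋯ + g_{r_1} t^{r_1}` over `S = ℂ[g_1,…,g_{r_1},b_0,…,b_{r-1}] = R r1 r`,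
where `g_k` is the variable `Sum.inl ⟨k-1⟩`. -/
def Gser (r1 r : ℕ) : PowerSeries (R r1 r) :=
  ser r1 fun k => if h : 1 ≤ k ∧ k ≤ r1 then X (Sum.inl ⟨k - 1, by omega⟩) else 0

/-- `1 + w_{r-1} t + ⋯ + w_0 t^r`. -/
def Wser (r1 r : ℕ) (w : Fin r → R r1 r) : PowerSeries (R r1 r) :=
  ser r fun k => if h : 1 ≤ k ∧ k ≤ r then w ⟨r - k, by omega⟩ else 0

/-- `1 + w_{r-1} t + ⋯ + w_1 t^{r-1}`. -/
def Whatser (r1 r : ℕ) (w : Fin r → R r1 r) : PowerSeries (R r1 r) :=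
  ser (r - 1) fun k => if h : 1 ≤ k ∧ k ≤ r - 1 then w ⟨r - k, by omega⟩ else 0

/-- `w_0,…,w_{r-1}` are the unique polynomials with
`(1 + g_1 t + ⋯ + g_{r_1}t^{r_1})(1 + w_{r-1}t + ⋯ + w_0 t^r) ≡ 1 + b_{r-1}t + ⋯ + b_0 t^r
(mod t^{r+1})`. -/
def wSpec (r1 r : ℕ) (w : Fin r → R r1 r) : Prop :=
  ∀ k ≤ r, PowerSeries.coeff k (Gser r1 r * Wser r1 r w)
    = PowerSeries.coeff k (Bser r1 r)

/-- `φ'_i = w_i` for `0 ≤ i ≤ r_1-1`, and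
`φ'_{s·r_1+i} = ∂^s w_{r_1-1} / (∂g_{r_1}^{s-1} ∂g_{1+i})` for `s ≥ 1`, `0 ≤ i ≤ r_1-1`. -/
def phi' (r1 r : ℕ) (h1 : 0 < r1) (h2 : r1 < r) (w : Fin r → R r1 r) (m : ℕ) : R r1 r :=
  if h : m < r1 then w ⟨m, by omega⟩
  else
    (fun q => pderiv (Sum.inl (⟨r1 - 1, by omega⟩ : Fin r1)) q)^[m / r1 - 1]
      (pderiv (Sum.inl (⟨m % r1, Nat.mod_lt m h1⟩ : Fin r1)) (w ⟨r1 - 1, by omega⟩))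

/-- The substitution `g_k ↦ γ_{n-k}`, `b_j ↦ b_j`, from `S = R r1 r` to `R n r`. -/
def subst (n r r1 : ℕ) (γ : ℕ → R n r) : R r1 r →ₐ[ℂ] R n r :=
  aeval (Sum.elim (fun i : Fin r1 => γ (n - ((i : ℕ) + 1))) fun j : Fin r => X (Sum.inr j))


/-- From `n = q_1·r + r_1` with `q_1 ≥ 1` we get `r ≤ n`. -/
theorem rle (q1 r r1 n : ℕ) (hq1 : 1 ≤ q1) (hn : n = q1 * r + r1) : r ≤ n := by
  have := Nat.le_mul_of_pos_left r hq1
  omega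


/-- The tuple `(ψ_0,…,ψ_{q_1r-1}, γ_{n-r_1},…,γ_{n-1}, b_0,…,b_{r-1})`. -/
def tup (n r q1 : ℕ) (hr : 0 < r) (hrn : r ≤ n) (d : Fin n → R n r) (γ : ℕ → R n r) :
    Fin n ⊕ Fin r → R n r :=
  Sum.elim
    (fun i : Fin n => if (i : ℕ) < q1 * r then psi n r hr hrn d (i : ℕ) else γ (i : ℕ))
    fun j : Fin r => X (Sum.inr j)

/-- The square Jacobian matrix of `n+r` elements of `R n r` with respect to the variables
`(a_0,…,a_{n-1},b_0,…,b_{r-1})`. -/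
def jacSq (n r : ℕ) (p : Fin n ⊕ Fin r → R n r) :
    Matrix (Fin n ⊕ Fin r) (Fin n ⊕ Fin r) (R n r) :=
  Matrix.of fun i v => pderiv v (p i)

end TB

/-! Write `β` for the inverse of `B = 1 + b_{r-1}t + ⋯ + b_0 t^r`, and
`A = 1 + a_{n-1}t + ⋯ + a_0 t^n`. Then `d_{n-k} = [t^k] βA`, and since `∂β/∂b_j = -t^{r-j} β²`
while `A` does not involve the `b`'s, differentiating keeps us inside the same family:
`ψ_m = (-1)^s s! · [t^{n-m}] β^{s+1} A` with `s = ⌊m/r⌋`; likewise `γ_m = [t^{n-m}] β^{q_1} A`.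
If `f` is a power series free of the `a`'s with `f ≡ 1` at the origin, then `[t^k] fA` vanishes at
the origin and its linear part in the `a`'s is `a_{n-k}`. So the Jacobian at the origin is block
triangular, with diagonal blocks `diag((-1)^s s!)` and the identity. Finally
`a_{n-k} = [t^k] B^{q_1} · (β^{q_1} A)` is a polynomial in the `b`'s and the `γ`'s. -/

namespace Derivation

variable {k A : Type*} [CommRing k] [CommRing A] [Algebra k A]

def mapPowerSeries (D : Derivation k A A) : Derivation k (PowerSeries A) (PowerSeries A) :=
  Derivation.mk'
    { toFun := fun f => PowerSeries.mk fun i => D (PowerSeries.coeff i f)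
      map_add' := fun f g => by ext; simp
      map_smul' := fun c f => by ext; simp [LinearMap.map_smul_of_tower] }
    fun f g => by
      ext i
      simp only [LinearMap.coe_mk, AddHom.coe_mk, PowerSeries.coeff_mk, PowerSeries.coeff_mul,
        map_sum, leibniz, smul_eq_mul, Finset.sum_add_distrib, map_add]
      rw [← Finset.Nat.sum_antidiagonal_swap
        (f := fun p => PowerSeries.coeff p.1 g * D (PowerSeries.coeff p.2 f))]
      simp only [Prod.fst_swap, Prod.snd_swap]

@[simp]
theorem coeff_mapPowerSeries (D : Derivation k A A) (f : PowerSeries A) (i : ℕ) :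
    PowerSeries.coeff i (D.mapPowerSeries f) = D (PowerSeries.coeff i f) := by
  simp [mapPowerSeries]

theorem coeff_iterate_mapPowerSeries (D : Derivation k A A) (m i : ℕ) (f : PowerSeries A) :
    PowerSeries.coeff i (D.mapPowerSeries^[m] f) = D^[m] (PowerSeries.coeff i f) := by
  induction m generalizing f with
  | zero => rfl
  | succ m ih => rw [Function.iterate_succ_apply, Function.iterate_succ_apply, ih,
      coeff_mapPowerSeries]

theorem mapPowerSeries_X_pow (D : Derivation k A A) (e : ℕ) :
    D.mapPowerSeries (PowerSeries.X ^ e) = 0 := by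
  ext i : 1
  simp only [coeff_mapPowerSeries, PowerSeries.coeff_X_pow, map_zero]
  split_ifs <;> simp

theorem iterate_mul_of_map_eq_zero (D : Derivation k A A) {c : A} (hc : D c = 0) (m : ℕ)
    (f : A) : D^[m] (c * f) = c * D^[m] f := by
  induction m generalizing f with
  | zero => rfl
  | succ m ih => rw [Function.iterate_succ_apply, Function.iterate_succ_apply, ← ih, leibniz, hc,
      smul_zero, add_zero, smul_eq_mul]

theorem iterate_sq_of_mul_eq_one (D : Derivation k A A) {b u : A} (h : b * u = 1)
    (hb : D (D b) = 0) (m : ℕ) :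
    D^[m] (u ^ 2) = ((-1) ^ m * (m + 1).factorial : ℤ) • (u ^ (m + 2) * D b ^ m) := by
  have hu : D u = -(u ^ 2 * D b) := by
    rw [D.leibniz_of_mul_eq_one (by rw [mul_comm]; exact h), neg_smul, smul_eq_mul]
  induction m with
  | zero => simp
  | succ m ih =>
    rw [Function.iterate_succ_apply', ih, map_zsmul, leibniz, leibniz_pow, leibniz_pow, hb, hu]
    simp only [smul_eq_mul, nsmul_eq_mul, zsmul_eq_mul, Nat.factorial_succ]
    push_cast
    ring

end Derivation

theorem PowerSeries.coeff_pow_mem {k A : Type*} [CommSemiring k] [CommSemiring A] [Algebra k A]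
    {S : Subalgebra k A} {f : PowerSeries A} (hf : ∀ i, coeff i f ∈ S) (m i : ℕ) :
    coeff i (f ^ m) ∈ S := by
  have hfS : f = map (S.val : S →+* A) (mk fun i => (⟨coeff i f, hf i⟩ : S)) := by
    ext i : 1
    simp
  rw [hfS, ← map_pow, coeff_map]
  exact Subtype.prop _

namespace TB

variable {n r : ℕ}

theorem coeff_ser {A : Type*} [CommRing A] (m : ℕ) (cf : ℕ → A) (k : ℕ) :
    PowerSeries.coeff k (ser m cf) = if k = 0 then 1 else if k ≤ m then cf k else 0 :=
  PowerSeries.coeff_mk _ _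

theorem constantCoeff_Aser : PowerSeries.constantCoeff (Aser n r) = 1 := by
  simp [← PowerSeries.coeff_zero_eq_constantCoeff_apply, Aser, coeff_ser]

theorem constantCoeff_Bser : PowerSeries.constantCoeff (Bser n r) = 1 := by
  simp [← PowerSeries.coeff_zero_eq_constantCoeff_apply, Bser, coeff_ser]

theorem map_constantCoeff_Aser : PowerSeries.map constantCoeff (Aser n r) = 1 := by
  ext k : 1
  simp only [Aser, PowerSeries.coeff_map, coeff_ser, PowerSeries.coeff_one]
  split_ifs <;> simp

theorem map_constantCoeff_Bser : PowerSeries.map constantCoeff (Bser n r) = 1 := by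
  ext k : 1
  simp only [Bser, PowerSeries.coeff_map, coeff_ser, PowerSeries.coeff_one]
  split_ifs <;> simp

theorem mapPowerSeries_pderiv_inl_Aser (j : Fin n) :
    (pderiv (Sum.inl j)).mapPowerSeries (Aser n r) = PowerSeries.X ^ (n - j) := by
  have := j.isLt
  ext k : 1
  simp only [Aser, Derivation.coeff_mapPowerSeries, coeff_ser, PowerSeries.coeff_X_pow]
  split_ifs <;> simp [pderiv_X, Pi.single_apply, Fin.ext_iff] <;> omega

theorem mapPowerSeries_pderiv_inr_Aser (w : Fin r) :
    (pderiv (Sum.inr w)).mapPowerSeries (Aser n r) = 0 := by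
  ext k : 1
  simp only [Aser, Derivation.coeff_mapPowerSeries, coeff_ser]
  split_ifs <;> simp [pderiv_X]

theorem mapPowerSeries_pderiv_inl_Bser (j : Fin n) :
    (pderiv (Sum.inl j)).mapPowerSeries (Bser n r) = 0 := by
  ext k : 1
  simp only [Bser, Derivation.coeff_mapPowerSeries, coeff_ser]
  split_ifs <;> simp [pderiv_X]

theorem mapPowerSeries_pderiv_inr_Bser (w : Fin r) :
    (pderiv (Sum.inr w)).mapPowerSeries (Bser n r) = PowerSeries.X ^ (r - w) := by
  have := w.isLt
  ext k : 1
  simp only [Bser, Derivation.coeff_mapPowerSeries, coeff_ser, PowerSeries.coeff_X_pow]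
  split_ifs <;> simp [pderiv_X, Pi.single_apply, Fin.ext_iff] <;> omega

variable {Binv : PowerSeries (R n r)}

theorem map_constantCoeff_of_Bser_mul_eq_one (hB : Bser n r * Binv = 1) :
    PowerSeries.map constantCoeff Binv = 1 := by
  have h := congrArg (PowerSeries.map constantCoeff) hB
  rwa [map_mul, map_one, map_constantCoeff_Bser, one_mul] at h

theorem mapPowerSeries_pderiv_of_Bser_mul_eq_one (hB : Bser n r * Binv = 1)
    (v : Fin n ⊕ Fin r) : (pderiv v).mapPowerSeries Binv
      = -(Binv ^ 2 * (pderiv v).mapPowerSeries (Bser n r)) := by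
  rw [Derivation.leibniz_of_mul_eq_one _ (by rw [mul_comm]; exact hB), neg_smul, smul_eq_mul]

theorem mapPowerSeries_pderiv_inl_pow_of_Bser_mul_eq_one (hB : Bser n r * Binv = 1)
    (j : Fin n) (p : ℕ) : (pderiv (Sum.inl j)).mapPowerSeries (Binv ^ p) = 0 := by
  rw [Derivation.leibniz_pow, mapPowerSeries_pderiv_of_Bser_mul_eq_one hB,
    mapPowerSeries_pderiv_inl_Bser]
  simp

theorem iterate_mapPowerSeries_pderiv_Binv_mul_Aser (hr : 0 < r) (hB : Bser n r * Binv = 1)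
    (w : Fin r) (s : ℕ) :
    (pderiv (Sum.inr ⟨0, hr⟩)).mapPowerSeries^[s]
        ((pderiv (Sum.inr w)).mapPowerSeries (Binv * Aser n r))
      = ((-1) ^ (s + 1) * (s + 1).factorial : ℤ)
        • (PowerSeries.X ^ (r - w + r * s) * (Binv ^ (s + 2) * Aser n r)) := by
  set D0 := (pderiv (R := ℂ) (Sum.inr (⟨0, hr⟩ : Fin r) : Fin n ⊕ Fin r)).mapPowerSeries
  have hD0A : D0 (-(Aser n r * PowerSeries.X ^ (r - w))) = 0 := by
    rw [map_neg, Derivation.leibniz, mapPowerSeries_pderiv_inr_Aser,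
      Derivation.mapPowerSeries_X_pow]
    simp
  have hD0B : D0 (D0 (Bser n r)) = 0 := by
    rw [mapPowerSeries_pderiv_inr_Bser, Derivation.mapPowerSeries_X_pow]
  rw [Derivation.leibniz, mapPowerSeries_pderiv_inr_Aser,
    mapPowerSeries_pderiv_of_Bser_mul_eq_one hB, mapPowerSeries_pderiv_inr_Bser, smul_zero,
    zero_add, smul_eq_mul, show Aser n r * -(Binv ^ 2 * PowerSeries.X ^ (r - w))
      = -(Aser n r * PowerSeries.X ^ (r - w)) * Binv ^ 2 by ring,
    Derivation.iterate_mul_of_map_eq_zero _ hD0A, Derivation.iterate_sq_of_mul_eq_one _ hB hD0B,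
    mapPowerSeries_pderiv_inr_Bser, Nat.sub_zero, ← pow_mul]
  simp only [zsmul_eq_mul]
  push_cast
  ring

theorem dSpec.eq_coeff {d : Fin n → R n r} (hd : dSpec n r d) (hB : Bser n r * Binv = 1)
    (i : Fin n) : d i = PowerSeries.coeff (n - i) (Binv * Aser n r) := by
  have hcoeff : PowerSeries.coeff (n - i) (Binv * (Bser n r * Dser n r d))
      = PowerSeries.coeff (n - i) (Binv * Aser n r) := by
    rw [PowerSeries.coeff_mul, PowerSeries.coeff_mul]
    refine Finset.sum_congr rfl fun x hx => ?_
    rw [hd x.2 (by have := Finset.HasAntidiagonal.mem_antidiagonal.mp hx; omega)]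
  rw [← hcoeff, ← mul_assoc, mul_comm Binv, hB, one_mul, Dser, coeff_ser]
  have := i.isLt
  rw [if_neg (by omega), if_pos (by omega), dif_pos (by omega)]
  congr 1
  ext
  simp only
  omega

theorem psi_eq_smul_coeff (hr : 0 < r) (hrn : r ≤ n) {d : Fin n → R n r} (hd : dSpec n r d)
    (hB : Bser n r * Binv = 1) {m : ℕ} (hm : m < n) :
    psi n r hr hrn d m = ((-1) ^ (m / r) * (m / r).factorial : ℤ)
      • PowerSeries.coeff (n - m) (Binv ^ (m / r + 1) * Aser n r) := by
  unfold psi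
  split_ifs with hmr
  · rw [Nat.div_eq_of_lt hmr, hd.eq_coeff hB]
    simp
  obtain ⟨s, hs⟩ : ∃ s, m / r = s + 1 :=
    ⟨m / r - 1, by have := (Nat.one_le_div_iff hr).mpr (not_lt.mp hmr); omega⟩
  have hm' : r * s + r + m % r = m := by rw [← mul_add_one, ← hs, Nat.div_add_mod]
  have := Nat.mod_lt m hr
  rw [hs, Nat.add_sub_cancel, hd.eq_coeff hB, ← Derivation.coeff_mapPowerSeries,
    ← Derivation.coeff_iterate_mapPowerSeries, iterate_mapPowerSeries_pderiv_Binv_mul_Aser hr hB,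
    map_zsmul, PowerSeries.coeff_X_pow_mul', if_pos (by simp only; omega)]
  congr 3
  simp only
  omega

theorem exists_tup_inl_eq_smul_coeff (q1 : ℕ) (hr : 0 < r) (hrn : r ≤ n)
    {d : Fin n → R n r} (hd : dSpec n r d) (hB : Bser n r * Binv = 1) {γ : ℕ → R n r}
    (hγ : ∀ k, 1 ≤ k → k ≤ n → γ (n - k) = PowerSeries.coeff k (Binv ^ q1 * Aser n r))
    (i : Fin n) : ∃ (c : ℤ) (p : ℕ), c ≠ 0 ∧ tup n r q1 hr hrn d γ (Sum.inl i)
      = c • PowerSeries.coeff (n - i) (Binv ^ p * Aser n r) := by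
  have hi := i.isLt
  simp only [tup, Sum.elim_inl]
  split_ifs
  · exact ⟨_, _, by positivity, psi_eq_smul_coeff hr hrn hd hB hi⟩
  · refine ⟨1, q1, one_ne_zero, ?_⟩
    rw [one_smul, ← hγ (n - i) (by omega) (by omega), Nat.sub_sub_self hi.le]

theorem constantCoeff_coeff_mul_Aser {f : PowerSeries (R n r)}
    (hf : PowerSeries.map constantCoeff f = 1) {k : ℕ} (hk : k ≠ 0) :
    constantCoeff (PowerSeries.coeff k (f * Aser n r)) = 0 := by
  rw [← PowerSeries.coeff_map, map_mul, hf, map_constantCoeff_Aser, one_mul,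
    PowerSeries.coeff_one, if_neg hk]

theorem constantCoeff_pderiv_inl_coeff_mul_Aser {f : PowerSeries (R n r)}
    (hf : PowerSeries.map constantCoeff f = 1) {j : Fin n}
    (hfj : (pderiv (Sum.inl j)).mapPowerSeries f = 0) (k : ℕ) :
    constantCoeff (pderiv (Sum.inl j) (PowerSeries.coeff k (f * Aser n r)))
      = if k = n - j then 1 else 0 := by
  rw [← Derivation.coeff_mapPowerSeries, Derivation.leibniz, hfj, smul_zero, add_zero,
    mapPowerSeries_pderiv_inl_Aser, smul_eq_mul, ← PowerSeries.coeff_map, map_mul, hf, one_mul,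
    map_pow, PowerSeries.map_X, PowerSeries.coeff_X_pow]

theorem isUnit_det_map_jacSq {p : Fin n ⊕ Fin r → R n r} {c : Fin n → ℂ}
    (hc : ∀ i, c i ≠ 0)
    (hpa : ∀ i j, constantCoeff (pderiv (Sum.inl j) (p (Sum.inl i))) = if i = j then c i else 0)
    (hpb : ∀ j, p (Sum.inr j) = X (Sum.inr j)) :
    IsUnit ((jacSq n r p).map (ev0 n r)).det := by
  set M := (jacSq n r p).map (ev0 n r)
  have hM : M = fromBlocks (diagonal c) M.toBlocks₁₂ 0 1 := by
    ext (i | i) (j | j) <;>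
      simp [M, jacSq, ev0, eval_zero', hpa, hpb, pderiv_X, Pi.single_apply, diagonal_apply,
        toBlocks₁₂, one_apply]
  rw [hM, det_fromBlocks_zero₂₁, det_diagonal, det_one, mul_one]
  exact (Finset.prod_ne_zero_iff.mpr fun i _ => hc i).isUnit

theorem adjoin_gamma_X_inr_eq_top (q1 : ℕ) (hB : Bser n r * Binv = 1) {γ : ℕ → R n r}
    (hγ : ∀ k, 1 ≤ k → k ≤ n → γ (n - k) = PowerSeries.coeff k (Binv ^ q1 * Aser n r)) :
    Algebra.adjoin ℂ ((Set.range fun i : Fin n => γ (i : ℕ))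
        ∪ Set.range fun j : Fin r => (X (Sum.inr j) : R n r)) = ⊤ := by
  set T := Algebra.adjoin ℂ ((Set.range fun i : Fin n => γ (i : ℕ))
        ∪ Set.range fun j : Fin r => (X (Sum.inr j) : R n r))
  have hBT (k : ℕ) : PowerSeries.coeff k (Bser n r) ∈ T := by
    rw [Bser, coeff_ser]
    split_ifs <;> first
      | exact T.one_mem
      | exact T.zero_mem
      | exact Algebra.subset_adjoin (Or.inr ⟨_, rfl⟩)
  have hγT (k : ℕ) (hk : k ≤ n) : PowerSeries.coeff k (Binv ^ q1 * Aser n r) ∈ T := by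
    rcases Nat.eq_zero_or_pos k with rfl | hk0
    · have hBinv : PowerSeries.constantCoeff Binv = 1 := by
        simpa [constantCoeff_Bser] using congrArg PowerSeries.constantCoeff hB
      simp [hBinv, constantCoeff_Aser, T.one_mem]
    · rw [← hγ k hk0 hk]
      exact Algebra.subset_adjoin (Or.inl ⟨⟨n - k, by omega⟩, rfl⟩)
  rw [eq_top_iff, ← adjoin_range_X, Algebra.adjoin_le_iff]
  rintro _ ⟨i | j, rfl⟩
  · have hi := i.isLt
    have hXA : (X (Sum.inl i) : R n r)
        = PowerSeries.coeff (n - i) (Bser n r ^ q1 * (Binv ^ q1 * Aser n r)) := by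
      rw [← mul_assoc, ← mul_pow, hB, one_pow, one_mul, Aser, coeff_ser, if_neg (by omega),
        if_pos (by omega), dif_pos (by omega)]
      congr 2
      ext
      simp only
      omega
    rw [hXA, PowerSeries.coeff_mul]
    refine T.sum_mem fun x hx => T.mul_mem (PowerSeries.coeff_pow_mem hBT _ _) (hγT _ ?_)
    have := Finset.HasAntidiagonal.mem_antidiagonal.mp hx
    omega
  · exact Algebra.subset_adjoin (Or.inr ⟨j, rfl⟩)

/-- Lemma 3.15: `(ψ_0,…,ψ_{q_1r-1},γ_{n-r_1},…,γ_{n-1},b_0,…,b_{r-1})` is a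
local coordinate system around `0` on `ℂ^n × ℂ^r`, and `R = ℂ[γ_0,…,γ_{n-1},b_0,…,b_{r-1}]`. -/
theorem stmt18 (n r q1 r1 : ℕ) (hq1 : 1 ≤ q1) (h2 : r1 < r)
    (hn : n = q1 * r + r1)
    (d : Fin n → R n r) (hd : dSpec n r d)
    (Binv : PowerSeries (R n r)) (hBinv : Bser n r * Binv = 1)
    (γ : ℕ → R n r)
    (hγ : ∀ k, 1 ≤ k → k ≤ n →
      γ (n - k) = PowerSeries.coeff k (Binv ^ q1 * Aser n r)) :
    (∀ v : Fin n ⊕ Fin r,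
      constantCoeff (tup n r q1 (by omega) (rle q1 r r1 n (by omega) hn) d γ v) = 0)
    ∧ IsUnit ((jacSq n r (tup n r q1 (by omega) (rle q1 r r1 n (by omega) hn) d γ)).map (ev0 n r)).det
    ∧ Algebra.adjoin ℂ ((Set.range fun i : Fin n => γ (i : ℕ))
        ∪ Set.range fun j : Fin r => (X (Sum.inr j) : R n r)) = ⊤ := by
  choose c p hc htup using
    exists_tup_inl_eq_smul_coeff q1 (by omega) (rle q1 r r1 n (by omega) hn) hd hBinv hγ
  have hpow (i : Fin n) : PowerSeries.map constantCoeff (Binv ^ p i) = 1 := by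
    rw [map_pow, map_constantCoeff_of_Bser_mul_eq_one hBinv, one_pow]
  refine ⟨?_, ?_, adjoin_gamma_X_inr_eq_top q1 hBinv hγ⟩
  · rintro (i | j)
    · rw [htup, map_zsmul, constantCoeff_coeff_mul_Aser (hpow i) (by omega), smul_zero]
    · simp [tup]
  · refine isUnit_det_map_jacSq (c := fun i => (c i : ℂ)) (by simpa using hc) (fun i j => ?_)
      fun j => rfl
    have hij : n - (i : ℕ) = n - j ↔ i = j := by
      have := i.isLt
      have := j.isLt
      rw [Fin.ext_iff]
      omega
    rw [htup, map_zsmul, map_zsmul, constantCoeff_pderiv_inl_coeff_mul_Aser (hpow i)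
      (mapPowerSeries_pderiv_inl_pow_of_Bser_mul_eq_one hBinv j _)]
    simp [hij]

end TB
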